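/- arXiv:hep-th/0703175 — 2 statements merged into one kernel-verified Lean document; each statement's English description precedes it below -/
import Mathlib

section
/- For the asymptotic canonical moments ⟨n₋^k⟩^C = m^k − (k/V)·(z₀²/(q²+4z₀²))·m^{k−1} + (k(k−1)/(2V))·(z₀²/√(q²+4z₀²))·m^{k−2}, where m = (√(q²+4z₀²) − q)/2, the semi-intensive quantity S_k = (⟨N^k⟩ − ⟨N⟩^k)/⟨N⟩^{k−1} (with ⟨N^k⟩ = V^k⟨n^k⟩) converges as V → ∞ to (k(k−1)/4)·(√(q²+4z₀²) + q)/√(q²+4z₀²). -/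
open Filter Real Topology

/-!
With `x = 1/V` one has `⟨N⟩ = V (m - a x)`, and `(m - a x)^k = m^k - k a m^(k-1) x + O(x²)`, so the
terms of order `V^(k-1)` in `⟨N^k⟩ - ⟨N⟩^k` cancel and
`S_k = (k(k-1)/2 · b m^(k-2) + O(x)) / (m - a x)^(k-1) → k(k-1)/2 · b / m`.
For the canonical coefficient `b = z₀²/s`, the identity `2 z₀² = m (s + q)` turns `b / m` into
`(s + q) / (2 s)`.
-/

noncomputable def canonicalMoment (m a b : ℝ) (j : ℕ) (V : ℝ) : ℝ :=
  m ^ j - ((j : ℝ) / V) * a * m ^ (j - 1) + ((j : ℝ) * ((j : ℝ) - 1) / (2 * V)) * b * m ^ (j - 2)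

theorem canonicalMoment_one (m a b V : ℝ) : canonicalMoment m a b 1 V = m - a * V⁻¹ := by
  simp [canonicalMoment, div_eq_mul_inv, mul_comm]

theorem tendsto_slope_pow_sub_mul (m a : ℝ) (k : ℕ) :
    Tendsto (fun x : ℝ => ((m - a * x) ^ k - m ^ k) / x) (𝓝[≠] 0)
      (𝓝 (-((k : ℝ) * a * m ^ (k - 1)))) := by
  have hderiv : HasDerivAt (fun x : ℝ => (m - a * x) ^ k) (-((k : ℝ) * a * m ^ (k - 1))) 0 := by
    refine ((((hasDerivAt_id (0 : ℝ)).const_mul a).const_sub m).pow k).congr_deriv ?_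
    simp only [id, mul_zero, sub_zero, mul_one, mul_neg]
    ring
  refine (hasDerivAt_iff_tendsto_slope.mp hderiv).congr fun x => ?_
  simp [slope_def_field]

theorem tendsto_inv_mul_canonicalMoment_sub_pow (m a b : ℝ) (k : ℕ) :
    Tendsto (fun x : ℝ => x⁻¹ * (canonicalMoment m a b k x⁻¹ - (m - a * x) ^ k)) (𝓝[≠] 0)
      (𝓝 ((k : ℝ) * ((k : ℝ) - 1) / 2 * b * m ^ (k - 2))) := by
  have h := (tendsto_slope_pow_sub_mul m a k).neg.const_add
    ((k : ℝ) * ((k : ℝ) - 1) / 2 * b * m ^ (k - 2) - (k : ℝ) * a * m ^ (k - 1))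
  rw [neg_neg, sub_add_cancel] at h
  refine h.congr' (eventually_nhdsWithin_of_forall fun x (hx : x ≠ 0) => ?_)
  simp only [canonicalMoment, div_inv_eq_mul]
  field_simp
  ring

theorem pow_mul_sub_mul_pow_div_mul_pow_pred (y P A : ℝ) (k : ℕ) (hk : 1 ≤ k) :
    (y ^ k * P - (y * A) ^ k) / (y * A) ^ (k - 1) = y * (P - A ^ k) / A ^ (k - 1) := by
  obtain ⟨i, rfl⟩ : ∃ i, k = i + 1 := ⟨k - 1, by omega⟩
  rcases eq_or_ne y 0 with rfl | hy
  · simp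
  rw [mul_pow, Nat.add_sub_cancel, pow_succ, mul_pow, mul_assoc, mul_assoc, ← mul_sub,
    mul_div_mul_left _ _ (pow_ne_zero _ hy), ← mul_sub, mul_div_assoc]

theorem tendsto_semiIntensive_canonicalMoment (m a b : ℝ) (hm : m ≠ 0) (k : ℕ) (hk : 2 ≤ k) :
    Tendsto
      (fun V : ℝ => (V ^ k * canonicalMoment m a b k V - (V * canonicalMoment m a b 1 V) ^ k) /
        (V * canonicalMoment m a b 1 V) ^ (k - 1))
      atTop (𝓝 ((k : ℝ) * ((k : ℝ) - 1) / 2 * b / m)) := by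
  have hden : Tendsto (fun x : ℝ => (m - a * x) ^ (k - 1)) (𝓝[≠] 0) (𝓝 (m ^ (k - 1))) :=
    tendsto_nhdsWithin_of_tendsto_nhds ((by fun_prop : Continuous _).tendsto' 0 _ (by simp))
  have hlim := ((tendsto_inv_mul_canonicalMoment_sub_pow m a b k).div hden (pow_ne_zero _ hm)).comp
    (tendsto_inv_atTop_nhdsGT_zero.mono_right (nhdsWithin_mono _ fun _ hx => ne_of_gt hx))
  have hval : (k : ℝ) * ((k : ℝ) - 1) / 2 * b * m ^ (k - 2) / m ^ (k - 1) =
      (k : ℝ) * ((k : ℝ) - 1) / 2 * b / m := by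
    obtain ⟨i, rfl⟩ : ∃ i, k = i + 2 := ⟨k - 2, by omega⟩
    rw [show i + 2 - 1 = i + 1 by omega, Nat.add_sub_cancel]
    field_simp
    ring
  rw [hval] at hlim
  refine hlim.congr fun V => ?_
  simp only [Function.comp, Pi.div_apply, inv_inv, canonicalMoment_one]
  exact (pow_mul_sub_mul_pow_div_mul_pow_pred V _ _ k (by omega)).symm

/-- Canonical ensemble: with `s = √(q²+4z₀²)`, `m = (s-q)/2`, asymptotic moments
`⟨n₋^k⟩^C(V) = m^k - (k/V)(z₀²/s²) m^(k-1) + (k(k-1)/(2V))(z₀²/s) m^(k-2)`, and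
`⟨N₋⟩ = V·⟨n₋⟩` given by the `k = 1` case, the semi-intensive quantity
`S_k = (⟨N^k⟩ - ⟨N⟩^k)/⟨N⟩^(k-1)` converges as `V → ∞` to
`(k(k-1)/4)·(s+q)/s`. -/
theorem stmt_11 (q z₀ : ℝ) (hz : 0 < z₀) (k : ℕ) (hk : 2 ≤ k)
    (s m : ℝ) (hs : s = Real.sqrt (q ^ 2 + 4 * z₀ ^ 2)) (hm : m = (s - q) / 2)
    (nmom : ℕ → ℝ → ℝ)
    (hnmom : ∀ (j : ℕ) (V : ℝ), nmom j V =
      m ^ j - ((j : ℝ) / V) * (z₀ ^ 2 / s ^ 2) * m ^ (j - 1) +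
        ((j : ℝ) * ((j : ℝ) - 1) / (2 * V)) * (z₀ ^ 2 / s) * m ^ (j - 2)) :
    Tendsto
      (fun V : ℝ =>
        (V ^ k * nmom k V - (V * nmom 1 V) ^ k) / (V * nmom 1 V) ^ (k - 1))
      atTop (nhds ((k : ℝ) * ((k : ℝ) - 1) / 4 * ((s + q) / s))) := by
  have hs_sq : s ^ 2 = q ^ 2 + 4 * z₀ ^ 2 := by rw [hs]; exact sq_sqrt (by positivity)
  have hs_pos : 0 < s := hs ▸ sqrt_pos.mpr (by positivity)
  have hm_pos : 0 < m := by rw [hm]; nlinarith [sq_nonneg (s + q)]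
  have hz_sq : 2 * z₀ ^ 2 = m * (s + q) := by rw [hm]; linear_combination (-1 / 2 : ℝ) * hs_sq
  obtain rfl : nmom = canonicalMoment m (z₀ ^ 2 / s ^ 2) (z₀ ^ 2 / s) := funext₂ hnmom
  convert tendsto_semiIntensive_canonicalMoment m _ _ hm_pos.ne' k hk using 2
  field_simp
  linear_combination (2 - 2 * (k : ℝ)) * hz_sq
end

section
/- Laplace's method (leading order): let S : [a,b] → ℝ be continuous, smooth near its unique interior maximizer x₀ ∈ (a,b) with S''(x₀) < 0, and f : [a,b] → ℝ continuous and smooth near x₀ with f(x₀) ≠ 0. Then ∫ₐᵇ f(x) e^{λS(x)} dx ~ e^{λS(x₀)} f(x₀) √(2π/(λ|S''(x₀)|)) as λ → ∞, i.e. the ratio of the two sides tends to 1. -/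
open Filter Real intervalIntegral MeasureTheory

private lemma sqrt_tendsto_atTop : Tendsto Real.sqrt atTop atTop := by
  refine tendsto_atTop.2 fun b => ?_
  filter_upwards [eventually_ge_atTop (b ^ 2)] with x h1
  calc b ≤ |b| := le_abs_self b
    _ = Real.sqrt (b ^ 2) := (Real.sqrt_sq_eq_abs b).symm
    _ ≤ Real.sqrt x := Real.sqrt_le_sqrt h1

/-- `√l * exp (-ε l) → 0`. -/
private lemma sqrt_mul_exp_tendsto_zero {ε : ℝ} (hε : 0 < ε) :
    Tendsto (fun l : ℝ => Real.sqrt l * Real.exp (-(l * ε))) atTop (nhds 0) := by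
  have h1 : Tendsto (fun l : ℝ => l * ε) atTop atTop :=
    Tendsto.atTop_mul_const hε tendsto_id
  have h2 : Tendsto (fun x : ℝ => x * Real.exp (-x)) atTop (nhds 0) := by
    simpa using Real.tendsto_pow_mul_exp_neg_atTop_nhds_zero 1
  have h3 : Tendsto (fun l : ℝ => (l * ε) * Real.exp (-(l * ε))) atTop (nhds 0) :=
    h2.comp h1
  have h4 : Tendsto (fun l : ℝ => ε⁻¹ * ((l * ε) * Real.exp (-(l * ε)))) atTop (nhds 0) := by
    simpa using h3.const_mul ε⁻¹
  apply squeeze_zero_norm' (a := fun l => ε⁻¹ * ((l * ε) * Real.exp (-(l * ε))))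
  · filter_upwards [eventually_ge_atTop (1 : ℝ)] with l hl
    have hl0 : (0:ℝ) ≤ l := le_trans zero_le_one hl
    have hs : Real.sqrt l ≤ l := by
      nlinarith [Real.sq_sqrt hl0, Real.sqrt_nonneg l, Real.sqrt_le_sqrt hl,
        Real.sqrt_one]
    have : ε⁻¹ * ((l * ε) * Real.exp (-(l * ε))) = l * Real.exp (-(l * ε)) := by
      field_simp
    rw [this, Real.norm_eq_abs, abs_of_nonneg
      (mul_nonneg (Real.sqrt_nonneg l) (Real.exp_pos _).le)]
    exact mul_le_mul_of_nonneg_right hs (Real.exp_pos _).le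
  · exact h4

/-- Laplace's method (leading order): if `S` is continuous on `[a,b]`, smooth at its
unique interior maximizer `x₀ ∈ (a,b)` with `S''(x₀) < 0`, and `f` is continuous on
`[a,b]`, smooth at `x₀` with `f(x₀) ≠ 0`, then
`∫ₐᵇ f(x) e^(λS(x)) dx ~ e^(λS(x₀)) f(x₀) √(2π/(λ|S''(x₀)|))` as `λ → ∞`,
i.e. the ratio of the two sides tends to `1`. -/
theorem stmt_16 (a b x₀ : ℝ) (hab : a < b) (hx₀ : x₀ ∈ Set.Ioo a b)
    (S f : ℝ → ℝ)
    (hScont : ContinuousOn S (Set.Icc a b))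
    (hfcont : ContinuousOn f (Set.Icc a b))
    (hSsmooth : ContDiffAt ℝ (⊤ : ℕ∞) S x₀)
    (hfsmooth : ContDiffAt ℝ (⊤ : ℕ∞) f x₀)
    (hmax : ∀ x ∈ Set.Icc a b, x ≠ x₀ → S x < S x₀)
    (hS'' : iteratedDeriv 2 S x₀ < 0)
    (hf : f x₀ ≠ 0) :
    Tendsto
      (fun l : ℝ =>
        (∫ x in a..b, f x * Real.exp (l * S x)) /
          (Real.exp (l * S x₀) * f x₀ *
            Real.sqrt (2 * Real.pi / (l * |iteratedDeriv 2 S x₀|))))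
      atTop (nhds 1) := by
  set c : ℝ := |iteratedDeriv 2 S x₀| with hc_def
  have hc : 0 < c := abs_pos.2 (ne_of_lt hS'')
  have hceq : iteratedDeriv 2 S x₀ = -c := by
    rw [hc_def, abs_of_neg hS'']; ring
  -- S differentiable near x₀, deriv S differentiable at x₀
  obtain ⟨u, hu_mem, hu_cd⟩ := hSsmooth.contDiffOn (m := 3) (WithTop.coe_le_coe.2 le_top) (by simp)
  set V : Set ℝ := interior u with hV_def
  have hV_open : IsOpen V := isOpen_interior
  have hV_x₀ : x₀ ∈ V := mem_interior_iff_mem_nhds.2 hu_mem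
  have hV_cd : ContDiffOn ℝ 3 S V := hu_cd.mono interior_subset
  have hV_diff : ∀ x ∈ V, DifferentiableAt ℝ S x := fun x hx =>
    ((hV_cd x hx).differentiableWithinAt (by norm_num)).differentiableAt
      (hV_open.mem_nhds hx)
  have hV_cd' : ContDiffOn ℝ 2 (deriv S) V :=
    hV_cd.deriv_of_isOpen hV_open (by norm_num)
  have hderiv2 : DifferentiableAt ℝ (deriv S) x₀ :=
    ((hV_cd' x₀ hV_x₀).differentiableWithinAt (by norm_num)).differentiableAt
      (hV_open.mem_nhds hV_x₀)
  -- deriv S x₀ = 0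
  have hIoo_mem : Set.Ioo a b ∈ nhds x₀ := (isOpen_Ioo).mem_nhds hx₀
  have hS'0 : deriv S x₀ = 0 := by
    apply IsLocalMax.deriv_eq_zero
    filter_upwards [hIoo_mem] with x hx
    rcases eq_or_ne x x₀ with rfl | hne
    · exact le_refl _
    · exact (hmax x (Set.mem_Icc_of_Ioo hx) hne).le
  have hD2 : deriv (deriv S) x₀ = -c := by
    rw [← hceq, iteratedDeriv_succ, iteratedDeriv_succ, iteratedDeriv_zero]
  -- Step A: slope limit
  have hslope : Tendsto (fun x => (S x - S x₀) / (x - x₀) ^ 2) (nhdsWithin x₀ {x₀}ᶜ)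
      (nhds (-(c / 2))) := by
    have hVmem : V ∈ nhds x₀ := hV_open.mem_nhds hV_x₀
    -- deriv quotient limit
    have hd : Tendsto (fun x => deriv (fun y => S y - S x₀) x / deriv (fun y => (y - x₀) ^ 2) x)
        (nhdsWithin x₀ {x₀}ᶜ) (nhds (-(c / 2))) := by
      have hslopeS' : Tendsto (fun x => deriv S x / (x - x₀)) (nhdsWithin x₀ {x₀}ᶜ)
          (nhds (-c)) := by
        have := hasDerivAt_iff_tendsto_slope.1 (hderiv2.hasDerivAt)
        rw [hD2] at this
        refine this.congr' ?_
        filter_upwards [self_mem_nhdsWithin] with x hx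
        simp [slope_def_field, hS'0]
      have h2 : Tendsto (fun x => (deriv S x / (x - x₀)) / 2) (nhdsWithin x₀ {x₀}ᶜ)
          (nhds (-(c / 2))) := by
        have := hslopeS'.div_const 2
        rwa [neg_div] at this
      refine h2.congr' ?_
      have hVmem' : V ∈ nhdsWithin x₀ {x₀}ᶜ := nhdsWithin_le_nhds hVmem
      filter_upwards [hVmem', self_mem_nhdsWithin] with x hxV hxne
      have h1 : deriv (fun y => S y - S x₀) x = deriv S x := by
        rw [deriv_sub_const]
      have h2 : deriv (fun y => (y - x₀) ^ 2) x = 2 * (x - x₀) := by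
        have : HasDerivAt (fun y : ℝ => (y - x₀) ^ 2) (2 * (x - x₀)) x := by
          have := ((hasDerivAt_id x).sub_const x₀).pow 2
          simpa [Pi.pow_def] using this
        rw [this.deriv]
      rw [h1, h2]
      rw [div_div]
      ring_nf
    apply deriv.lhopital_zero_nhdsNE _ _ _ _ hd
    · filter_upwards [nhdsWithin_le_nhds hVmem, self_mem_nhdsWithin] with x hxV _
      exact (hV_diff x hxV).sub_const _
    · filter_upwards [self_mem_nhdsWithin] with x hx
      have : HasDerivAt (fun y : ℝ => (y - x₀) ^ 2) (2 * (x - x₀)) x := by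
        have := ((hasDerivAt_id x).sub_const x₀).pow 2
        simpa [Pi.pow_def] using this
      rw [this.deriv]
      simp only [mul_ne_zero_iff]
      exact ⟨two_ne_zero, sub_ne_zero.2 hx⟩
    · have hScont_at : ContinuousAt S x₀ := hSsmooth.continuousAt
      have : Tendsto (fun x => S x - S x₀) (nhds x₀) (nhds (S x₀ - S x₀)) :=
        (hScont_at.tendsto).sub_const _
      simpa using this.mono_left nhdsWithin_le_nhds
    · have : Tendsto (fun x : ℝ => (x - x₀) ^ 2) (nhds x₀) (nhds ((x₀ - x₀) ^ 2)) := by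
        exact ((continuous_id.sub continuous_const).pow 2).continuousAt
      simpa using this.mono_left nhdsWithin_le_nhds
  -- Step B: δ with quadratic bound
  obtain ⟨δ, hδpos, hδsub, hδquad⟩ :
      ∃ δ > 0, Set.Icc (x₀ - δ) (x₀ + δ) ⊆ Set.Ioo a b ∧
        ∀ x ∈ Set.Icc (x₀ - δ) (x₀ + δ), S x - S x₀ ≤ -(c / 4) * (x - x₀) ^ 2 := by
    have hlt : -(c / 2) < -(c / 4) := by linarith
    have hev : ∀ᶠ x in nhdsWithin x₀ {x₀}ᶜ, (S x - S x₀) / (x - x₀) ^ 2 < -(c / 4) :=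
      hslope.eventually (Filter.Tendsto.eventually_lt_const hlt tendsto_id |>.mono fun _ h => h)
    rw [eventually_nhdsWithin_iff] at hev
    rw [Metric.eventually_nhds_iff] at hev
    obtain ⟨ε₁, hε₁, hball⟩ := hev
    obtain ⟨ε₂, hε₂, hball₂⟩ := Metric.mem_nhds_iff.1 hIoo_mem
    refine ⟨min ε₁ ε₂ / 2, by positivity, ?_, ?_⟩
    · intro x hx
      apply hball₂
      rw [Metric.mem_ball, Real.dist_eq]
      have h1 : |x - x₀| ≤ min ε₁ ε₂ / 2 := abs_sub_le_iff.2 ⟨by linarith [hx.2], by linarith [hx.1]⟩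
      calc |x - x₀| ≤ min ε₁ ε₂ / 2 := h1
        _ < ε₂ := by have := min_le_right ε₁ ε₂; linarith
    · intro x hx
      rcases eq_or_ne x x₀ with rfl | hne
      · simp
      · have hdist : dist x x₀ < ε₁ := by
          rw [Real.dist_eq]
          have h1 : |x - x₀| ≤ min ε₁ ε₂ / 2 :=
            abs_sub_le_iff.2 ⟨by linarith [hx.2], by linarith [hx.1]⟩
          have := min_le_left ε₁ ε₂; linarith
        have := hball hdist hne
        have hne' : x - x₀ ≠ 0 := sub_ne_zero.2 hne
        have hsq : (0:ℝ) < (x - x₀) ^ 2 := by positivity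
        calc S x - S x₀ = ((S x - S x₀) / (x - x₀) ^ 2) * (x - x₀) ^ 2 := by
              field_simp
          _ ≤ -(c / 4) * (x - x₀) ^ 2 := by nlinarith
  have haδ : a < x₀ - δ := (hδsub ⟨le_refl _, by linarith⟩).1
  have hbδ : x₀ + δ < b := (hδsub ⟨by linarith, le_refl _⟩).2
  -- Step C: tail bound
  obtain ⟨ε₀, hε₀, htail⟩ :
      ∃ ε₀ > 0, ∀ x ∈ Set.Icc a b, δ ≤ |x - x₀| → S x - S x₀ ≤ -ε₀ := by
    set K : Set ℝ := Set.Icc a b ∩ {x | δ ≤ |x - x₀|} with hK_def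
    have hK_closed : IsClosed K :=
      isClosed_Icc.inter (isClosed_le continuous_const ((continuous_id.sub continuous_const).abs))
    have hK_cpt : IsCompact K := (isCompact_Icc).inter_right
      (isClosed_le continuous_const ((continuous_id.sub continuous_const).abs))
    rcases K.eq_empty_or_nonempty with hK | hK
    · refine ⟨1, one_pos, fun x hx hd => ?_⟩
      exfalso
      have hxK : x ∈ K := ⟨hx, hd⟩
      rw [hK] at hxK
      exact hxK
    · obtain ⟨z, hzK, hz⟩ := hK_cpt.exists_isMaxOn hK (hScont.mono Set.inter_subset_left)
      have hzne : z ≠ x₀ := by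
        intro h; rw [h] at hzK
        have := hzK.2
        simp only [Set.mem_setOf_eq, sub_self, abs_zero] at this
        linarith
      have hzlt : S z < S x₀ := hmax z hzK.1 hzne
      refine ⟨S x₀ - S z, by linarith, fun x hx hd => ?_⟩
      have := hz ⟨hx, hd⟩
      simp only [Set.mem_setOf_eq] at this
      linarith [this]
  -- bound on |f|
  obtain ⟨M, hM⟩ : ∃ M, ∀ x ∈ Set.Icc a b, |f x| ≤ M := by
    obtain ⟨M, hM⟩ := (isCompact_Icc.image_of_continuousOn hfcont.abs).bddAbove
    exact ⟨M, fun x hx => hM ⟨x, hx, rfl⟩⟩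
  have hM0 : 0 ≤ M := le_trans (abs_nonneg _) (hM x₀ (Set.mem_Icc_of_Ioo hx₀))
  -- Integrability of pieces
  have hcontg : ∀ l : ℝ, ContinuousOn (fun x => f x * Real.exp (l * (S x - S x₀)))
      (Set.Icc a b) := fun l =>
    hfcont.mul (((hScont.sub continuousOn_const).const_smul l).rexp)

  -- the three pieces
  set g : ℝ → ℝ → ℝ := fun l x => f x * Real.exp (l * (S x - S x₀)) with hg_def
  have hint : ∀ l : ℝ, ∀ p q : ℝ, p ∈ Set.Icc a b → q ∈ Set.Icc a b →
      IntervalIntegrable (g l) MeasureTheory.volume p q := by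
    intro l p q hp hq
    apply ContinuousOn.intervalIntegrable
    apply (hcontg l).mono
    exact Set.uIcc_subset_Icc hp hq
  have hmem1 : (x₀ - δ) ∈ Set.Icc a b := ⟨haδ.le, by linarith⟩
  have hmem2 : (x₀ + δ) ∈ Set.Icc a b := ⟨by linarith, hbδ.le⟩
  have hmema : a ∈ Set.Icc a b := ⟨le_refl _, hab.le⟩
  have hmemb : b ∈ Set.Icc a b := ⟨hab.le, le_refl _⟩
  have hsplit : ∀ l : ℝ, (∫ x in a..b, g l x) =
      (∫ x in a..(x₀ - δ), g l x) + (∫ x in (x₀ - δ)..(x₀ + δ), g l x) +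
        (∫ x in (x₀ + δ)..b, g l x) := by
    intro l
    rw [integral_add_adjacent_intervals (hint l a (x₀ - δ) hmema hmem1)
      (hint l (x₀ - δ) (x₀ + δ) hmem1 hmem2),
      integral_add_adjacent_intervals (hint l a (x₀ + δ) hmema hmem2)
      (hint l (x₀ + δ) b hmem2 hmemb)]
  -- tail estimates
  have htail_bound : ∀ p q : ℝ, p ∈ Set.Icc a b → q ∈ Set.Icc a b →
      (∀ x ∈ Set.uIoc p q, δ ≤ |x - x₀|) →
      Tendsto (fun l => Real.sqrt l * ∫ x in p..q, g l x) atTop (nhds 0) := by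
    intro p q hp hq hfar
    apply squeeze_zero_norm' (a := fun l => (M * |q - p|) * (Real.sqrt l * Real.exp (-(l * ε₀))))
    · filter_upwards [eventually_ge_atTop (0 : ℝ)] with l hl
      have hb : ∀ x ∈ Set.uIoc p q, ‖g l x‖ ≤ M * Real.exp (-(l * ε₀)) := by
        intro x hx
        have hxab : x ∈ Set.Icc a b :=
          Set.uIcc_subset_Icc hp hq (Set.uIoc_subset_uIcc hx)
        have hSx : S x - S x₀ ≤ -ε₀ := htail x hxab (hfar x hx)
        have hexp : l * (S x - S x₀) ≤ -(l * ε₀) := by nlinarith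
        rw [hg_def]
        simp only [Real.norm_eq_abs, abs_mul, Real.abs_exp]
        exact mul_le_mul (hM x hxab) (Real.exp_le_exp.2 hexp) (Real.exp_pos _).le hM0
      have h1 : ‖∫ x in p..q, g l x‖ ≤ (M * Real.exp (-(l * ε₀))) * |q - p| :=
        intervalIntegral.norm_integral_le_of_norm_le_const hb
      rw [norm_mul, Real.norm_eq_abs, Real.norm_eq_abs,
        abs_of_nonneg (Real.sqrt_nonneg l)]
      calc Real.sqrt l * |∫ x in p..q, g l x|
          ≤ Real.sqrt l * ((M * Real.exp (-(l * ε₀))) * |q - p|) := by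
            apply mul_le_mul_of_nonneg_left _ (Real.sqrt_nonneg l)
            rwa [Real.norm_eq_abs] at h1
        _ = (M * |q - p|) * (Real.sqrt l * Real.exp (-(l * ε₀))) := by ring
    · simpa using (sqrt_mul_exp_tendsto_zero hε₀).const_mul (M * |q - p|)
  have htail1 : Tendsto (fun l => Real.sqrt l * ∫ x in a..(x₀ - δ), g l x) atTop (nhds 0) := by
    apply htail_bound a (x₀ - δ) hmema hmem1
    intro x hx
    rw [Set.uIoc_of_le haδ.le] at hx
    have : x ≤ x₀ - δ := hx.2
    rw [abs_sub_comm, abs_of_nonneg (by linarith)]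
    linarith
  have htail2 : Tendsto (fun l => Real.sqrt l * ∫ x in (x₀ + δ)..b, g l x) atTop (nhds 0) := by
    apply htail_bound (x₀ + δ) b hmem2 hmemb
    intro x hx
    rw [Set.uIoc_of_le hbδ.le] at hx
    have : x₀ + δ < x := hx.1
    rw [abs_of_nonneg (by linarith)]
    linarith
  -- center piece via substitution and dominated convergence
  set L : ℝ := f x₀ * Real.sqrt (2 * Real.pi / c) with hL_def
  have hL_pos : Real.sqrt (2 * Real.pi / c) > 0 :=
    Real.sqrt_pos.2 (by positivity)
  have hLne : L ≠ 0 := mul_ne_zero hf (ne_of_gt hL_pos)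
  set F : ℝ → ℝ → ℝ := fun l y =>
    Set.indicator (Set.Ioc (-(δ * Real.sqrt l)) (δ * Real.sqrt l))
      (fun y => f (x₀ + y / Real.sqrt l) *
        Real.exp (l * (S (x₀ + y / Real.sqrt l) - S x₀))) y with hF_def
  have hmapsto : ∀ l : ℝ, 0 < l → Set.MapsTo (fun y => x₀ + y / Real.sqrt l)
      (Set.Ioc (-(δ * Real.sqrt l)) (δ * Real.sqrt l)) (Set.Icc (x₀ - δ) (x₀ + δ)) := by
    intro l hl y hy
    have hsl : 0 < Real.sqrt l := Real.sqrt_pos.2 hl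
    constructor
    · have := hy.1
      have : -(δ * Real.sqrt l) ≤ y := le_of_lt hy.1
      have h2 : -δ ≤ y / Real.sqrt l := by
        rw [neg_le, ← neg_div]
        rw [div_le_iff₀ hsl]
        linarith
      linarith
    · have : y ≤ δ * Real.sqrt l := hy.2
      have h2 : y / Real.sqrt l ≤ δ := by
        rw [div_le_iff₀ hsl]
        linarith
      linarith
  have hsub_Icc : Set.Icc (x₀ - δ) (x₀ + δ) ⊆ Set.Icc a b :=
    fun x hx => Set.mem_Icc_of_Ioo (hδsub hx)
  -- DCT
  have hδsl : Tendsto (fun l : ℝ => δ * Real.sqrt l) atTop atTop :=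
    (sqrt_tendsto_atTop).const_mul_atTop hδpos
  have hDCT : Tendsto (fun l => ∫ y, F l y) atTop
      (nhds (∫ y, f x₀ * Real.exp (-(c / 2) * y ^ 2))) := by
    apply MeasureTheory.tendsto_integral_filter_of_dominated_convergence
      (bound := fun y => M * Real.exp (-(c / 4) * y ^ 2))
    · -- measurability
      filter_upwards [eventually_gt_atTop (0 : ℝ)] with l hl
      rw [hF_def]
      rw [aestronglyMeasurable_indicator_iff measurableSet_Ioc]
      apply ContinuousOn.aestronglyMeasurable _ measurableSet_Ioc
      have hφ : Continuous (fun y : ℝ => x₀ + y / Real.sqrt l) :=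
        continuous_const.add (continuous_id.div_const _)
      apply ContinuousOn.mul
      · exact (hfcont.mono hsub_Icc).comp hφ.continuousOn
          (fun y hy => hmapsto l hl hy)
      · have hSc : ContinuousOn (fun y => S (x₀ + y / Real.sqrt l) - S x₀)
            (Set.Ioc (-(δ * Real.sqrt l)) (δ * Real.sqrt l)) :=
          ((hScont.mono hsub_Icc).comp hφ.continuousOn
            (fun y hy => hmapsto l hl hy)).sub continuousOn_const
        exact Real.continuous_exp.comp_continuousOn (hSc.const_smul l)
    · -- bound
      filter_upwards [eventually_gt_atTop (0 : ℝ)] with l hl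
      apply MeasureTheory.ae_of_all
      intro y
      rw [hF_def]
      simp only [Set.indicator_apply]
      split_ifs with hy
      · have hsl : 0 < Real.sqrt l := Real.sqrt_pos.2 hl
        have hxin : x₀ + y / Real.sqrt l ∈ Set.Icc (x₀ - δ) (x₀ + δ) := hmapsto l hl hy
        have hquad := hδquad _ hxin
        have hsq : (x₀ + y / Real.sqrt l - x₀) ^ 2 = y ^ 2 / l := by
          rw [add_sub_cancel_left, div_pow, Real.sq_sqrt hl.le]
        have hexp : l * (S (x₀ + y / Real.sqrt l) - S x₀) ≤ -(c / 4) * y ^ 2 := by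
          have h1 : S (x₀ + y / Real.sqrt l) - S x₀ ≤ -(c / 4) * (y ^ 2 / l) := by
            rw [← hsq]; exact hquad
          calc l * (S (x₀ + y / Real.sqrt l) - S x₀) ≤ l * (-(c / 4) * (y ^ 2 / l)) :=
                mul_le_mul_of_nonneg_left h1 hl.le
            _ = -(c / 4) * y ^ 2 := by field_simp
        rw [Real.norm_eq_abs, abs_mul, Real.abs_exp]
        exact mul_le_mul (hM _ (hsub_Icc hxin)) (Real.exp_le_exp.2 hexp)
          (Real.exp_pos _).le hM0
      · simp only [norm_zero]
        positivity
    · exact (integrable_exp_neg_mul_sq (by positivity : (0:ℝ) < c / 4)).const_mul M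
    · -- pointwise convergence
      apply MeasureTheory.ae_of_all
      intro y
      have hev : ∀ᶠ l : ℝ in atTop, F l y =
          f (x₀ + y / Real.sqrt l) * Real.exp (l * (S (x₀ + y / Real.sqrt l) - S x₀)) := by
        filter_upwards [hδsl.eventually (eventually_gt_atTop |y|)] with l hl
        rw [hF_def]
        apply Set.indicator_of_mem
        constructor
        · calc -(δ * Real.sqrt l) < -|y| := by linarith
            _ ≤ y := neg_abs_le y
        · exact le_of_lt (lt_of_le_of_lt (le_abs_self y) hl)
      have hφ0 : Tendsto (fun l : ℝ => x₀ + y / Real.sqrt l) atTop (nhds x₀) := by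
        have : Tendsto (fun l : ℝ => y / Real.sqrt l) atTop (nhds 0) :=
          tendsto_const_nhds.div_atTop sqrt_tendsto_atTop
        simpa using tendsto_const_nhds.add this
      have hfpart : Tendsto (fun l : ℝ => f (x₀ + y / Real.sqrt l)) atTop (nhds (f x₀)) :=
        (hfsmooth.continuousAt.tendsto).comp hφ0
      have hexp_part : Tendsto (fun l : ℝ => l * (S (x₀ + y / Real.sqrt l) - S x₀)) atTop
          (nhds (-(c / 2) * y ^ 2)) := by
        rcases eq_or_ne y 0 with rfl | hy0
        · simp only [zero_div, add_zero, sub_self, mul_zero]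
          have : -(c / 2) * (0:ℝ) ^ 2 = 0 := by ring
          rw [this]
          exact tendsto_const_nhds
        · have hkey : ∀ᶠ l : ℝ in atTop, l * (S (x₀ + y / Real.sqrt l) - S x₀) =
              y ^ 2 * ((S (x₀ + y / Real.sqrt l) - S x₀) /
                ((x₀ + y / Real.sqrt l) - x₀) ^ 2) := by
            filter_upwards [eventually_gt_atTop (0 : ℝ)] with l hl
            have hsl : 0 < Real.sqrt l := Real.sqrt_pos.2 hl
            have h1 : ((x₀ + y / Real.sqrt l) - x₀) ^ 2 = y ^ 2 / l := by
              rw [add_sub_cancel_left, div_pow, Real.sq_sqrt hl.le]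
            rw [h1]
            have hy2 : y ^ 2 ≠ 0 := pow_ne_zero _ hy0
            field_simp
          have hR : Tendsto (fun l : ℝ => (S (x₀ + y / Real.sqrt l) - S x₀) /
              ((x₀ + y / Real.sqrt l) - x₀) ^ 2) atTop (nhds (-(c / 2))) := by
            apply hslope.comp
            rw [tendsto_nhdsWithin_iff]
            refine ⟨hφ0, ?_⟩
            filter_upwards [eventually_gt_atTop (0 : ℝ)] with l hl
            have hsl : 0 < Real.sqrt l := Real.sqrt_pos.2 hl
            simp only [Set.mem_compl_iff, Set.mem_singleton_iff]
            intro h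
            apply hy0
            have h2 : y / Real.sqrt l = 0 := by linarith [congrArg (fun t => t - x₀) h]
            rcases div_eq_zero_iff.1 h2 with h3 | h3
            · exact h3
            · exact absurd h3 (ne_of_gt hsl)
          have h2 : Tendsto (fun l : ℝ => y ^ 2 * ((S (x₀ + y / Real.sqrt l) - S x₀) /
              ((x₀ + y / Real.sqrt l) - x₀) ^ 2)) atTop (nhds (y ^ 2 * -(c / 2))) :=
            tendsto_const_nhds.mul hR
          rw [show y ^ 2 * -(c / 2) = -(c / 2) * y ^ 2 by ring] at h2
          exact Tendsto.congr' (hkey.mono fun _ h => h.symm) h2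
      have hexp_t : Tendsto (fun l : ℝ =>
          Real.exp (l * (S (x₀ + y / Real.sqrt l) - S x₀))) atTop
          (nhds (Real.exp (-(c / 2) * y ^ 2))) :=
        (Real.continuous_exp.tendsto _).comp hexp_part
      exact Tendsto.congr' (hev.mono fun _ h => h.symm) (hfpart.mul hexp_t)
  -- value of the Gaussian integral
  have hgauss : (∫ y : ℝ, f x₀ * Real.exp (-(c / 2) * y ^ 2)) = L := by
    rw [MeasureTheory.integral_const_mul, integral_gaussian, hL_def]
    congr 1
    rw [show Real.pi / (c / 2) = 2 * Real.pi / c by field_simp]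
  rw [hgauss] at hDCT
  -- center identity: for l > 0, ∫ y, F l y = √l * ∫ x in x₀-δ..x₀+δ, g l x
  have hcenter_eq : ∀ᶠ l : ℝ in atTop, (∫ y, F l y) =
      Real.sqrt l * ∫ x in (x₀ - δ)..(x₀ + δ), g l x := by
    filter_upwards [eventually_gt_atTop (0 : ℝ)] with l hl
    have hsl : 0 < Real.sqrt l := Real.sqrt_pos.2 hl
    have h1 : (∫ y, F l y) = ∫ y in (-(δ * Real.sqrt l))..(δ * Real.sqrt l),
        f (x₀ + y / Real.sqrt l) * Real.exp (l * (S (x₀ + y / Real.sqrt l) - S x₀)) := by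
      rw [hF_def, MeasureTheory.integral_indicator measurableSet_Ioc,
        intervalIntegral.integral_of_le (by nlinarith : -(δ * Real.sqrt l) ≤ δ * Real.sqrt l)]
    rw [h1]
    have h2 := intervalIntegral.mul_integral_comp_mul_add
      (a := -(δ * Real.sqrt l)) (b := δ * Real.sqrt l)
      (f := g l) ((Real.sqrt l)⁻¹) x₀
    have h3 : (Real.sqrt l)⁻¹ * -(δ * Real.sqrt l) + x₀ = x₀ - δ := by
      field_simp; ring
    have h4 : (Real.sqrt l)⁻¹ * (δ * Real.sqrt l) + x₀ = x₀ + δ := by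
      field_simp; ring
    rw [h3, h4] at h2
    have h5 : ∀ y : ℝ, g l ((Real.sqrt l)⁻¹ * y + x₀) =
        f (x₀ + y / Real.sqrt l) * Real.exp (l * (S (x₀ + y / Real.sqrt l) - S x₀)) := by
      intro y
      rw [hg_def]
      simp only [div_eq_inv_mul]
      ring_nf
    simp only [h5] at h2
    rw [← h2]
    rw [← mul_assoc, mul_inv_cancel₀ (ne_of_gt hsl), one_mul]
  have hcenter : Tendsto (fun l => Real.sqrt l * ∫ x in (x₀ - δ)..(x₀ + δ), g l x)
      atTop (nhds L) := Tendsto.congr' hcenter_eq hDCT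
  -- combine
  have key : Tendsto (fun l => Real.sqrt l * ∫ x in a..b, g l x) atTop (nhds L) := by
    have := (htail1.add hcenter).add htail2
    rw [zero_add, add_zero] at this
    refine this.congr (fun l => ?_)
    rw [hsplit l]
    ring
  -- final assembly
  have hratio : ∀ᶠ l : ℝ in atTop,
      (∫ x in a..b, f x * Real.exp (l * S x)) /
        (Real.exp (l * S x₀) * f x₀ * Real.sqrt (2 * Real.pi / (l * c))) =
      (Real.sqrt l * ∫ x in a..b, g l x) / L := by
    filter_upwards [eventually_gt_atTop (0 : ℝ)] with l hl
    have hsl : 0 < Real.sqrt l := Real.sqrt_pos.2 hl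
    have hnum : (∫ x in a..b, f x * Real.exp (l * S x)) =
        Real.exp (l * S x₀) * ∫ x in a..b, g l x := by
      rw [← intervalIntegral.integral_const_mul]
      apply intervalIntegral.integral_congr
      intro x _
      rw [hg_def]
      simp only
      rw [← mul_assoc, mul_comm (Real.exp (l * S x₀)) (f x), mul_assoc, ← Real.exp_add]
      congr 2
      ring
    have hden : Real.sqrt (2 * Real.pi / (l * c)) =
        Real.sqrt (2 * Real.pi / c) / Real.sqrt l := by
      rw [show 2 * Real.pi / (l * c) = (2 * Real.pi / c) / l by field_simp,
        Real.sqrt_div (by positivity)]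
    rw [hnum, hden, hL_def]
    have he : Real.exp (l * S x₀) ≠ 0 := (Real.exp_pos _).ne'
    field_simp
  have final : Tendsto (fun l => (Real.sqrt l * ∫ x in a..b, g l x) / L) atTop (nhds 1) := by
    have := key.div_const L
    rwa [div_self hLne] at this
  exact Tendsto.congr' (hratio.mono fun _ h => h.symm) final
end
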